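/- Let μ ∈ 𝒫_p(ℝ) be atomless with median 0, let ε ∈ (0,1/2), I_ε := [X_μ(ε), X_μ(1−ε)], and C_ε μ := (1−2ε)^{-1} μ|_{I_ε}. Then for every 1 ≤ q ≤ p, diam(I_ε)^{p−q} · W_q(μ, C_ε μ)^q ≤ 2^p ∫_{I_ε^c} |x|^p dμ(x). -/

import Mathlib

/-!
Write `a = X_μ(ε)`, `b = X_μ(1 - ε)`, so that `a < 0 < b`. Couple `μ` with `C_ε μ` by leaving the
mass on `[a, b]` in place and spreading the left tail (mass `ε`) over `[a, 0]` and the right tail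
over `(0, b]`, proportionally to `μ`. Because the median is `0`, both halves carry mass `1/2 - ε`,
so the second marginal is `(1 + ε / (1/2 - ε)) μ|_{[a,b]} = C_ε μ`.
A point `x < a` moves by at most `|x|`, and `b - a ≤ b + |x| ≤ 2 max(b, |x|)`, hence
`(b - a)^(p-q) |x - y|^q ≤ 2^(p-1) (b^p + |x|^p)`. Integrating over the left tail, the term
`ε b^p` is dominated by the `p`-th moment of the right tail; symmetrically on the right.
-/

open Set MeasureTheory
open scoped ENNReal NNReal

/-- Quantile function of a probability measure on `ℝ`. -/
noncomputable def quantile (μ : Measure ℝ) (z : ℝ) : ℝ :=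
  sInf {a : ℝ | z < (μ (Iio a)).toReal}

/-- The `q`-Wasserstein transport cost `W_q(μ,ν)^q`. -/
noncomputable def WpCost (p : ℝ) (μ ν : Measure ℝ) : ℝ≥0∞ :=
  sInf {c | ∃ π : Measure (ℝ × ℝ), IsProbabilityMeasure π ∧
    π.map Prod.fst = μ ∧ π.map Prod.snd = ν ∧
    c = ∫⁻ q, ENNReal.ofReal (|q.1 - q.2| ^ p) ∂π}

/-- The compactification `C_ε μ = (1-2ε)⁻¹ μ|_{I_ε}`. -/
noncomputable def compactify (ε : ℝ) (μ : Measure ℝ) : Measure ℝ :=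
  (ENNReal.ofReal (1 - 2 * ε))⁻¹ • μ.restrict (Icc (quantile μ ε) (quantile μ (1 - ε)))

open Filter ProbabilityTheory

section Quantile

variable (μ : Measure ℝ) [IsProbabilityMeasure μ] [NullSingletonClass μ]

lemma continuous_cdf : Continuous (cdf μ) := by
  refine continuous_iff_continuousAt.2 fun x => ?_
  rw [(monotone_cdf μ).continuousAt_iff_leftLim_eq_rightLim, StieltjesFunction.rightLim_eq]
  refine le_antisymm ((monotone_cdf μ).leftLim_le le_rfl) ?_
  have h := (cdf μ).measure_singleton x
  rwa [measure_cdf, measure_singleton, eq_comm, ENNReal.ofReal_eq_zero, sub_nonpos] at h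

lemma quantile_eq_sInf_cdf (z : ℝ) : quantile μ z = sInf {a | z < cdf μ a} := by
  simp only [quantile, cdf_eq_real, measureReal_def, measure_congr (Iio_ae_eq_Iic (μ := μ))]

lemma cdf_quantile {z : ℝ} (hz : z ∈ Ioo 0 1) : cdf μ (quantile μ z) = z := by
  set S := {a | z < cdf μ a}
  have hS : S.Nonempty := ((tendsto_cdf_atTop μ).eventually (lt_mem_nhds hz.2)).exists
  have hSbdd : BddBelow S := by
    obtain ⟨x₀, hx₀⟩ := eventually_atBot.1 ((tendsto_cdf_atBot μ).eventually (gt_mem_nhds hz.1))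
    exact ⟨x₀, fun s hs => le_of_not_ge fun hsx => (hx₀ s hsx).not_gt hs⟩
  rw [quantile_eq_sInf_cdf]
  refine le_antisymm (not_lt.1 fun hlt => ?_) ?_
  · obtain ⟨x, hxS, hxlt⟩ := (((continuous_cdf μ).tendsto _).eventually (lt_mem_nhds hlt)
      |>.filter_mono nhdsWithin_le_nhds |>.and (self_mem_nhdsWithin (s := Iio (sInf S)))).exists
    exact (csInf_le hSbdd hxS).not_gt hxlt
  · exact closure_minimal (fun a ha => le_of_lt ha)
      (isClosed_le continuous_const (continuous_cdf μ)) (csInf_mem_closure hS hSbdd)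

lemma quantile_lt_quantile {z w : ℝ} (hz : z ∈ Ioo 0 1) (hw : w ∈ Ioo 0 1) (hzw : z < w) :
    quantile μ z < quantile μ w :=
  (monotone_cdf μ).reflect_lt (by rwa [cdf_quantile μ hz, cdf_quantile μ hw])

lemma measure_Iio_quantile {z : ℝ} (hz : z ∈ Ioo 0 1) :
    μ (Iio (quantile μ z)) = ENNReal.ofReal z := by
  rw [measure_congr Iio_ae_eq_Iic, ← ofReal_cdf, cdf_quantile μ hz]

lemma measure_Ioi_quantile {z : ℝ} (hz : z ∈ Ioo 0 1) :
    μ (Ioi (quantile μ z)) = ENNReal.ofReal (1 - z) := by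
  have h := (cdf μ).measure_Ioi (tendsto_cdf_atTop μ) (quantile μ z)
  rwa [measure_cdf, cdf_quantile μ hz] at h

lemma measure_Icc_quantile {z w : ℝ} (hz : z ∈ Ioo 0 1) (hw : w ∈ Ioo 0 1) :
    μ (Icc (quantile μ z) (quantile μ w)) = ENNReal.ofReal (w - z) := by
  have h := (cdf μ).measure_Ioc (quantile μ z) (quantile μ w)
  rwa [measure_cdf, cdf_quantile μ hz, cdf_quantile μ hw, measure_congr Ioc_ae_eq_Icc] at h

lemma measure_Ioc_quantile {z w : ℝ} (hz : z ∈ Ioo 0 1) (hw : w ∈ Ioo 0 1) :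
    μ (Ioc (quantile μ z) (quantile μ w)) = ENNReal.ofReal (w - z) := by
  rw [measure_congr Ioc_ae_eq_Icc, measure_Icc_quantile μ hz hw]

lemma measure_Iio_quantile_eq_measure_Ioi {ε : ℝ} (hε : ε ∈ Ioo 0 1) :
    μ (Iio (quantile μ ε)) = μ (Ioi (quantile μ (1 - ε))) := by
  rw [measure_Iio_quantile μ hε, measure_Ioi_quantile μ ⟨by linarith [hε.2], by linarith [hε.1]⟩,
    sub_sub_cancel]

lemma quantile_neg_and_pos_of_median {ε : ℝ} (hε : ε ∈ Ioo 0 (1 / 2))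
    (hmed : quantile μ (1 / 2) = 0) : quantile μ ε < 0 ∧ 0 < quantile μ (1 - ε) := by
  have hhalf : (1 / 2 : ℝ) ∈ Ioo 0 1 := ⟨by norm_num, by norm_num⟩
  obtain ⟨hε₀, hε₁⟩ := hε
  exact ⟨hmed ▸ quantile_lt_quantile μ ⟨hε₀, by linarith⟩ hhalf hε₁,
    hmed ▸ quantile_lt_quantile μ hhalf ⟨by linarith, by linarith⟩ (by linarith)⟩

end Quantile

lemma rpow_sub_mul_rpow_le {p q D c r s : ℝ} (hq : 1 ≤ q) (hqp : q ≤ p) (hr : 0 ≤ r)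
    (hs : 0 ≤ s) (hD₀ : 0 ≤ D) (hD : D ≤ r + s) (hc₀ : 0 ≤ c) (hc : c ≤ max r s) :
    D ^ (p - q) * c ^ q ≤ 2 ^ (p - 1) * (r ^ p + s ^ p) := by
  set M := max r s
  have hM : 0 ≤ M := hr.trans (le_max_left r s)
  have hDM : D ≤ 2 * M := by linarith [le_max_left r s, le_max_right r s]
  have hMp : M ^ p ≤ r ^ p + s ^ p := by
    rcases max_choice r s with h | h <;> rw [show M = _ from h]
    · exact le_add_of_nonneg_right (Real.rpow_nonneg hs p)
    · exact le_add_of_nonneg_left (Real.rpow_nonneg hr p)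
  calc D ^ (p - q) * c ^ q ≤ (2 * M) ^ (p - q) * M ^ q := by gcongr
    _ = 2 ^ (p - q) * M ^ p := by
      rw [Real.mul_rpow zero_le_two hM, mul_assoc, ← Real.rpow_add' hM (by linarith),
        sub_add_cancel]
    _ ≤ 2 ^ (p - 1) * (r ^ p + s ^ p) := by
      gcongr
      exact one_le_two

lemma ofReal_rpow_mul_le_setLIntegral (μ : Measure ℝ) {T : Set ℝ} (hT : MeasurableSet T)
    {p r : ℝ} (hp : 0 ≤ p) (hr : 0 ≤ r) (hrT : ∀ x ∈ T, r ≤ |x|) :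
    ENNReal.ofReal (r ^ p) * μ T ≤ ∫⁻ x in T, ENNReal.ofReal (|x| ^ p) ∂μ := by
  rw [← setLIntegral_const]
  exact setLIntegral_mono' hT fun x hx => ENNReal.ofReal_le_ofReal
    (Real.rpow_le_rpow hr (hrT x hx) hp)

lemma tail_transport_cost_le {μ ν : Measure ℝ} [SFinite μ] [IsZeroOrProbabilityMeasure ν]
    {T T' S : Set ℝ} (hT : MeasurableSet T) (hT' : MeasurableSet T') (hTT' : μ T = μ T')
    (hν : ∀ᵐ y ∂ν, y ∈ S) {p q D r : ℝ} (hq : 1 ≤ q) (hqp : q ≤ p) (hD : 0 ≤ D) (hr : 0 ≤ r)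
    (hDT : ∀ x ∈ T, D ≤ r + |x|) (hST : ∀ x ∈ T, ∀ y ∈ S, |x - y| ≤ |x|)
    (hrT' : ∀ x ∈ T', r ≤ |x|) :
    ENNReal.ofReal (D ^ (p - q)) * ∫⁻ z, ENNReal.ofReal (|z.1 - z.2| ^ q) ∂(μ.restrict T).prod ν
      ≤ ENNReal.ofReal (2 ^ (p - 1)) * (∫⁻ x in T', ENNReal.ofReal (|x| ^ p) ∂μ
        + ∫⁻ x in T, ENNReal.ofReal (|x| ^ p) ∂μ) := by
  have hcost : Measurable fun z : ℝ × ℝ => ENNReal.ofReal (|z.1 - z.2| ^ q) := by fun_prop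
  have hpointwise : ∀ x ∈ T, ∀ᵐ y ∂ν, ENNReal.ofReal (D ^ (p - q))
      * ENNReal.ofReal (|x - y| ^ q) ≤ ENNReal.ofReal (2 ^ (p - 1) * (r ^ p + |x| ^ p)) := by
    refine fun x hx => hν.mono fun y hy => ?_
    rw [← ENNReal.ofReal_mul (by positivity)]
    exact ENNReal.ofReal_le_ofReal (rpow_sub_mul_rpow_le hq hqp hr (abs_nonneg x) hD (hDT x hx)
      (abs_nonneg _) ((hST x hx y hy).trans (le_max_right _ _)))
  have hsplit : (fun x : ℝ => ENNReal.ofReal (2 ^ (p - 1) * (r ^ p + |x| ^ p))) = fun x =>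
      ENNReal.ofReal (2 ^ (p - 1)) * (ENNReal.ofReal (r ^ p) + ENNReal.ofReal (|x| ^ p)) :=
    funext fun x => by
      rw [ENNReal.ofReal_mul (by positivity), ENNReal.ofReal_add (by positivity) (by positivity)]
  calc ENNReal.ofReal (D ^ (p - q)) * ∫⁻ z, ENNReal.ofReal (|z.1 - z.2| ^ q) ∂(μ.restrict T).prod ν
      = ∫⁻ x in T, ∫⁻ y, ENNReal.ofReal (D ^ (p - q)) * ENNReal.ofReal (|x - y| ^ q) ∂ν ∂μ := by
        rw [lintegral_prod _ hcost.aemeasurable,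
          ← lintegral_const_mul _ hcost.lintegral_prod_right']
        exact lintegral_congr fun x => (lintegral_const_mul _ (by fun_prop)).symm
    _ ≤ ∫⁻ x in T, ENNReal.ofReal (2 ^ (p - 1) * (r ^ p + |x| ^ p)) ∂μ := by
        refine setLIntegral_mono' hT fun x hx => ?_
        calc _ ≤ ∫⁻ _, ENNReal.ofReal (2 ^ (p - 1) * (r ^ p + |x| ^ p)) ∂ν :=
              lintegral_mono_ae (hpointwise x hx)
          _ ≤ _ := by rw [lintegral_const]; exact mul_le_of_le_one_right' prob_le_one
    _ = ENNReal.ofReal (2 ^ (p - 1))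
          * (ENNReal.ofReal (r ^ p) * μ T' + ∫⁻ x in T, ENNReal.ofReal (|x| ^ p) ∂μ) := by
        rw [hsplit, lintegral_const_mul _ (by fun_prop), lintegral_add_left measurable_const,
          setLIntegral_const, hTT']
    _ ≤ _ := by
        gcongr
        exact ofReal_rpow_mul_le_setLIntegral μ hT' (by linarith) hr hrT'

noncomputable def splitCoupling (μ : Measure ℝ) (a b : ℝ) : Measure (ℝ × ℝ) :=
  (μ.restrict (Icc a b)).map (fun x => (x, x)) + (μ.restrict (Iio a)).prod μ[|Icc a 0]
    + (μ.restrict (Ioi b)).prod μ[|Ioc 0 b]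

section splitCoupling

variable (μ : Measure ℝ) {a b : ℝ}

lemma map_fst_splitCoupling [IsFiniteMeasure μ] (ha : a ≤ 0) (hb : 0 ≤ b) (hL : μ (Icc a 0) ≠ 0)
    (hR : μ (Ioc 0 b) ≠ 0) : (splitCoupling μ a b).map Prod.fst = μ := by
  have := cond_isProbabilityMeasure hL
  have := cond_isProbabilityMeasure hR
  rw [splitCoupling, Measure.map_add _ _ measurable_fst, Measure.map_add _ _ measurable_fst,
    Measure.map_map measurable_fst (by fun_prop), Measure.map_fst_prod, Measure.map_fst_prod,
    measure_univ, measure_univ, one_smul, one_smul,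
    show Prod.fst ∘ (fun x : ℝ => (x, x)) = id from rfl, Measure.map_id, add_comm (μ.restrict _),
    ← Measure.restrict_union ((Iio_disjoint_Ici le_rfl).mono_right Icc_subset_Ici_self)
      measurableSet_Icc, Iio_union_Icc_eq_Iic (ha.trans hb),
    ← Measure.restrict_union (Iic_disjoint_Ioi le_rfl) measurableSet_Ioi, Iic_union_Ioi,
    Measure.restrict_univ]

lemma map_snd_splitCoupling (ha : a ≤ 0) (hb : 0 ≤ b) (htail : μ (Iio a) = μ (Ioi b))
    (hhalf : μ (Icc a 0) = μ (Ioc 0 b)) : (splitCoupling μ a b).map Prod.snd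
      = (1 + μ (Iio a) / μ (Icc a 0)) • μ.restrict (Icc a b) := by
  rw [splitCoupling, Measure.map_add _ _ measurable_snd, Measure.map_add _ _ measurable_snd,
    Measure.map_map measurable_snd (by fun_prop), Measure.map_snd_prod, Measure.map_snd_prod,
    Measure.restrict_apply_univ, Measure.restrict_apply_univ, ProbabilityTheory.cond,
    ProbabilityTheory.cond, ← htail, ← hhalf, show Prod.snd ∘ (fun x : ℝ => (x, x)) = id from rfl,
    Measure.map_id, add_assoc, smul_smul, smul_smul, ← smul_add,
    ← Measure.restrict_union ((Iic_disjoint_Ioc le_rfl).mono_left Icc_subset_Iic_self)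
      measurableSet_Ioc, Icc_union_Ioc_eq_Icc ha hb, add_smul, one_smul, div_eq_mul_inv]

lemma lintegral_splitCoupling {f : ℝ × ℝ → ℝ≥0∞} (hf : Measurable f)
    (hdiag : ∀ x, f (x, x) = 0) :
    ∫⁻ z, f z ∂splitCoupling μ a b = ∫⁻ z, f z ∂(μ.restrict (Iio a)).prod μ[|Icc a 0]
      + ∫⁻ z, f z ∂(μ.restrict (Ioi b)).prod μ[|Ioc 0 b] := by
  rw [splitCoupling, lintegral_add_measure, lintegral_add_measure, lintegral_map hf (by fun_prop)]
  simp only [hdiag, lintegral_zero, zero_add]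

end splitCoupling

lemma one_add_ofReal_div_eq_inv {ε : ℝ} (hε : ε ∈ Ioo 0 (1 / 2)) :
    1 + ENNReal.ofReal ε / ENNReal.ofReal (1 / 2 - ε) = (ENNReal.ofReal (1 - 2 * ε))⁻¹ := by
  obtain ⟨hε₀, hε₁⟩ := hε
  rw [← ENNReal.ofReal_div_of_pos (by linarith), ← ENNReal.ofReal_one,
    ← ENNReal.ofReal_add zero_le_one (by positivity), ← ENNReal.ofReal_inv_of_pos (by linarith),
    one_add_div (by linarith), show 1 - 2 * ε = 2 * (1 / 2 - ε) by ring, mul_inv,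
    ← div_eq_inv_mul]
  ring_nf

lemma wpCost_compactify_le (μ : Measure ℝ) [IsProbabilityMeasure μ] [NullSingletonClass μ]
    (q : ℝ) {ε : ℝ} (hε : ε ∈ Ioo 0 (1 / 2)) (hmed : quantile μ (1 / 2) = 0) :
    WpCost q μ (compactify ε μ) ≤ ∫⁻ z, ENNReal.ofReal (|z.1 - z.2| ^ q)
      ∂splitCoupling μ (quantile μ ε) (quantile μ (1 - ε)) := by
  have hz : ε ∈ Ioo 0 1 := ⟨hε.1, by linarith [hε.2]⟩
  have hz' : 1 - ε ∈ Ioo 0 1 := ⟨by linarith [hε.2], by linarith [hε.1]⟩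
  have hhalf : (1 / 2 : ℝ) ∈ Ioo 0 1 := ⟨by norm_num, by norm_num⟩
  obtain ⟨ha, hb⟩ := quantile_neg_and_pos_of_median μ hε hmed
  have hL : μ (Icc (quantile μ ε) 0) = ENNReal.ofReal (1 / 2 - ε) :=
    hmed ▸ measure_Icc_quantile μ hz hhalf
  have hR : μ (Ioc 0 (quantile μ (1 - ε))) = ENNReal.ofReal (1 / 2 - ε) := by
    rw [← hmed, measure_Ioc_quantile μ hhalf hz']; ring_nf
  have hpos : ENNReal.ofReal (1 / 2 - ε) ≠ 0 := ENNReal.ofReal_ne_zero_iff.2 (by linarith [hε.2])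
  have hfst := map_fst_splitCoupling μ ha.le hb.le (hL ▸ hpos) (hR ▸ hpos)
  have hsnd : (splitCoupling μ (quantile μ ε) (quantile μ (1 - ε))).map Prod.snd
      = compactify ε μ := by
    rw [map_snd_splitCoupling μ ha.le hb.le (measure_Iio_quantile_eq_measure_Ioi μ hz)
        (hL.trans hR.symm),
      compactify, hL, measure_Iio_quantile μ hz, one_add_ofReal_div_eq_inv hε]
  have hprob : IsProbabilityMeasure (splitCoupling μ (quantile μ ε) (quantile μ (1 - ε))) :=
    ⟨by simpa [Measure.map_apply measurable_fst MeasurableSet.univ] using congrArg (· univ) hfst⟩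
  exact sInf_le ⟨_, hprob, hfst, hsnd, rfl⟩

lemma ofReal_two_rpow (p : ℝ) : ENNReal.ofReal (2 ^ p) = 2 * ENNReal.ofReal (2 ^ (p - 1)) := by
  rw [← ENNReal.ofReal_ofNat 2, ← ENNReal.ofReal_mul zero_le_two, Real.rpow_sub_one two_ne_zero,
    mul_div_cancel₀ _ two_ne_zero]

theorem compactification_error_q_general (p q ε : ℝ) (hq : 1 ≤ q) (hqp : q ≤ p)
    (hε : ε ∈ Ioo (0:ℝ) (1/2))
    (μ : Measure ℝ) [IsProbabilityMeasure μ] [NullSingletonClass μ]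
    (hmed : quantile μ (1/2) = 0) :
    ENNReal.ofReal ((Metric.diam (Icc (quantile μ ε) (quantile μ (1 - ε)))) ^ (p - q))
        * WpCost q μ (compactify ε μ)
      ≤ ENNReal.ofReal ((2:ℝ) ^ p)
        * ∫⁻ x in (Icc (quantile μ ε) (quantile μ (1 - ε)))ᶜ, ENNReal.ofReal (|x| ^ p) ∂μ := by
  have hW := wpCost_compactify_le μ q hε hmed
  obtain ⟨ha, hb⟩ := quantile_neg_and_pos_of_median μ hε hmed
  have htail := measure_Iio_quantile_eq_measure_Ioi μ ⟨hε.1, by linarith [hε.2]⟩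
  set a := quantile μ ε
  set b := quantile μ (1 - ε)
  have hleft := tail_transport_cost_le (ν := μ[|Icc a 0]) measurableSet_Iio measurableSet_Ioi htail
    (ae_cond_mem measurableSet_Icc) hq hqp (D := b - a) (by linarith) hb.le
    (fun x hx => by rw [abs_of_neg (hx.trans ha)]; linarith [mem_Iio.1 hx])
    (fun x hx y hy => by
      rw [abs_of_neg (hx.trans ha)]
      exact abs_le.2 ⟨by linarith [hy.2], by linarith [hy.1, mem_Iio.1 hx]⟩)
    fun x hx => (le_of_lt hx).trans (le_abs_self x)
  have hright := tail_transport_cost_le (ν := μ[|Ioc 0 b]) measurableSet_Ioi measurableSet_Iio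
    htail.symm (ae_cond_mem measurableSet_Ioc) hq hqp (D := b - a) (by linarith)
    (neg_nonneg.2 ha.le)
    (fun x hx => by rw [abs_of_pos (hb.trans hx)]; linarith [mem_Ioi.1 hx])
    (fun x hx y hy => by
      rw [abs_of_pos (hb.trans hx)]
      exact abs_le.2 ⟨by linarith [hy.2, mem_Ioi.1 hx], by linarith [hy.1]⟩)
    fun x hx => (neg_le_neg (le_of_lt hx)).trans (neg_le_abs x)
  rw [lintegral_splitCoupling μ (by fun_prop) (by simp [Real.zero_rpow (by linarith : q ≠ 0)])]
    at hW
  rw [Real.diam_Icc (by linarith),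
    show (Icc a b)ᶜ = Iio a ∪ Ioi b by ext; simp [or_iff_not_imp_left],
    lintegral_union measurableSet_Ioi (Iio_disjoint_Ioi_of_le (by linarith)), ofReal_two_rpow]
  refine (mul_le_mul_of_nonneg_left hW zero_le).trans ?_
  rw [mul_add]
  refine (add_le_add hleft hright).trans_eq ?_
  rw [add_comm (∫⁻ x in Ioi b, _ ∂μ), ← two_mul, ← mul_assoc]

/-- For an atomless `μ ∈ 𝒫_p(ℝ)` with median `0`, `ε ∈ (0,1/2)` and
`1 ≤ q ≤ p`, one has `diam(I_ε)^{p-q} W_q(μ, C_ε μ)^q ≤ 2^p ∫_{I_ε^c} |x|^p dμ`. -/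
theorem compactification_error_q (p q ε : ℝ) (hq : 1 ≤ q) (hqp : q ≤ p)
    (hε : ε ∈ Ioo (0:ℝ) (1/2))
    (μ : Measure ℝ) [IsProbabilityMeasure μ] [NullSingletonClass μ]
    (hmed : quantile μ (1/2) = 0)
    (hmom : (∫⁻ x, ENNReal.ofReal (|x| ^ p) ∂μ) < ⊤) :
    ENNReal.ofReal ((Metric.diam (Icc (quantile μ ε) (quantile μ (1 - ε)))) ^ (p - q))
        * WpCost q μ (compactify ε μ)
      ≤ ENNReal.ofReal ((2:ℝ) ^ p)
        * ∫⁻ x in (Icc (quantile μ ε) (quantile μ (1 - ε)))ᶜ, ENNReal.ofReal (|x| ^ p) ∂μ :=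
  compactification_error_q_general p q ε hq hqp hε μ hmed
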